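/- Let F be an algebraically closed field of characteristic 0, k ≥ 2 an integer, and J ∈ M_n(F) a Jordan canonical form matrix with at least two Jordan blocks, exactly one of which corresponds to the eigenvalue 0. Then for every C ∈ M_n(F) there exist X₁, X₂ ∈ M_n(F) with C = X₁^k + J·X₂^k. -/

import Mathlib

/-!
Let `N` be the nilpotent Jordan block and `v`, `u` the last and first basis vectors of its block.
Then `J G = 1 - v vᵀ` for the block diagonal `G` made of `Nᵀ` and the inverses of the other
blocks, and `J u = 0`. Given `C`, pick `α` outside the spectrum of `C` with `α ≠ vᵀ C v`, and put
`zᵀ = vᵀ C - α vᵀ`. The matrix `M = α + v zᵀ` is a `k`-th power, because `v zᵀ` is a nonzero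
multiple of an idempotent, and `vᵀ (C - M) = 0`; hence `C - M = J Y` for `Y = G (C - M) + u zᵀ`,
and `Y` is invertible because `C - α` is. Finally every invertible matrix over an algebraically
closed field of characteristic zero is a `k`-th power: a polynomial interpolating `k`-th roots on
the spectrum gives a root up to a nilpotent error, which Newton's method removes.
-/

/-- The Jordan block of size `m` with eigenvalue `lam`. -/
def jordanBlock {F : Type*} [Zero F] [One F] (lam : F) (m : ℕ) :
    Matrix (Fin m) (Fin m) F :=
  Matrix.of fun i j => if i = j then lam else if (i : ℕ) + 1 = (j : ℕ) then 1 else 0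

open Polynomial Matrix

theorem exists_pow_eq_of_isNilpotent_pow_sub {A : Type*} [CommRing A] {k : ℕ}
    (hk : IsUnit (k : A)) {x y : A} (hy : IsUnit y) (hxy : IsNilpotent (x ^ k - y)) :
    ∃ r : A, r ^ k = y := by
  have hxk : IsUnit (x ^ k) := by
    simpa using hxy.isUnit_add_left_of_commute hy (Commute.all _ _)
  have hxk' : IsUnit (x ^ (k - 1)) := by
    rcases k with _ | k
    · simp
    · exact isUnit_of_mul_isUnit_left (pow_succ x k ▸ hxk)
  obtain ⟨r, -, hr⟩ := (existsUnique_nilpotent_sub_and_aeval_eq_zero (x := x) (P := X ^ k - C y)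
    (by simpa using hxy) (by simpa [derivative_X_pow] using hk.mul hxk')).exists
  exact ⟨r, sub_eq_zero.mp (by simpa using hr)⟩

theorem Subalgebra.isUnit_of_isUnit_coe {R A : Type*} [CommRing R] [IsArtinianRing R] [Ring A]
    [Algebra R A] {B : Subalgebra R A} {b : B} (hi : IsIntegral R (b : A))
    (hb : IsUnit (b : A)) : IsUnit b :=
  IsArtinianRing.isUnit_of_isIntegral_of_nonZeroDivisor
    ((isIntegral_algHom_iff B.val Subtype.val_injective).mp hi)
    (comap_nonZeroDivisors_le_of_injective (f := B.val) Subtype.val_injective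
      hb.mem_nonZeroDivisors)

theorem Polynomial.Splits.dvd_pow_natDegree {F : Type*} [Field F] {f q : F[X]} (hf : f.Splits)
    (hf0 : f ≠ 0) (hq : ∀ μ ∈ f.roots, q.IsRoot μ) : f ∣ q ^ f.natDegree := by
  rw [hf.natDegree_eq_card_roots, ← Multiset.prod_replicate, ← Multiset.map_const']
  conv_lhs => rw [hf.eq_prod_roots]
  exact (C_mul_dvd (leadingCoeff_ne_zero.mpr hf0)).mpr
    (Multiset.prod_dvd_prod_of_dvd _ _ fun μ hμ => dvd_iff_isRoot.mpr (hq μ hμ))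

theorem exists_pow_eq_of_isIntegral_of_isUnit {F A : Type*} [Field F] [IsAlgClosed F]
    [CharZero F] [Ring A] [Algebra F A] {k : ℕ} (hk : k ≠ 0) {a : A} (hi : IsIntegral F a)
    (ha : IsUnit a) : ∃ b : A, b ^ k = a := by
  classical
  set f := minpoly F a
  choose ρ hρ using fun μ : F => IsAlgClosed.exists_pow_nat_eq μ (Nat.pos_of_ne_zero hk)
  set t := Lagrange.interpolate f.roots.toFinset id ρ
  have ht : ∀ μ ∈ f.roots, (t ^ k - X).IsRoot μ := fun μ hμ => by
    have := Lagrange.eval_interpolate_at_node ρ Function.injective_id.injOn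
      (Multiset.mem_toFinset.mpr hμ)
    rw [IsRoot.def, eval_sub, eval_pow, eval_X, show t.eval μ = ρ μ from this, hρ, sub_self]
  have hdvd := (IsAlgClosed.splits f).dvd_pow_natDegree (minpoly.ne_zero hi) ht
  let a' : Algebra.adjoin F {a} := ⟨a, Algebra.self_mem_adjoin_singleton F a⟩
  have hk' : IsUnit (k : Algebra.adjoin F {a}) := by
    simpa using (Nat.cast_ne_zero.mpr hk : (k : F) ≠ 0).isUnit.map (algebraMap F _)
  have hnil : IsNilpotent (aeval a' t ^ k - a') := ⟨f.natDegree, Subtype.ext <| by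
    simpa [a', coe_aeval_mk_apply] using minpoly.dvd_iff.mp hdvd⟩
  obtain ⟨r, hr⟩ := exists_pow_eq_of_isNilpotent_pow_sub hk'
    (Subalgebra.isUnit_of_isUnit_coe hi ha) hnil
  exact ⟨r, congrArg Subtype.val hr⟩

theorem IsIdempotentElem.smul_one_sub_add_smul_pow {F A : Type*} [Field F] [Ring A] [Algebra F A]
    {P : A} (hP : IsIdempotentElem P) (a d : F) (k : ℕ) :
    (a • (1 - P) + d • P) ^ k = a ^ k • (1 - P) + d ^ k • P := by
  induction k with
  | zero => simp
  | succ k ih =>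
    have h₁ : (1 - P) * P = 0 := by simp [sub_mul, hP.eq]
    have h₂ : P * (1 - P) = 0 := by simp [mul_sub, hP.eq]
    rw [pow_succ, ih]
    simp only [add_mul, mul_add, smul_mul_smul, hP.eq, hP.one_sub.eq, h₁, h₂, smul_zero,
      add_zero, zero_add, pow_succ]

theorem exists_pow_eq_smul_one_add {F A : Type*} [Field F] [IsAlgClosed F] [Ring A] [Algebra F A]
    {k : ℕ} (hk : k ≠ 0) {R : A} {τ : F} (hτ : τ ≠ 0) (hR : R * R = τ • R) (α : F) :
    ∃ X : A, X ^ k = α • 1 + R := by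
  obtain ⟨a, ha⟩ := IsAlgClosed.exists_pow_nat_eq α (Nat.pos_of_ne_zero hk)
  obtain ⟨d, hd⟩ := IsAlgClosed.exists_pow_nat_eq (α + τ) (Nat.pos_of_ne_zero hk)
  have hP : IsIdempotentElem (τ⁻¹ • R) := by
    rw [IsIdempotentElem, smul_mul_smul, hR, smul_smul]
    field_simp
  refine ⟨a • (1 - τ⁻¹ • R) + d • τ⁻¹ • R, ?_⟩
  rw [hP.smul_one_sub_add_smul_pow, ha, hd, smul_sub, smul_smul, smul_smul, add_mul, add_smul,
    mul_inv_cancel₀ hτ, one_smul]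
  abel

theorem Matrix.exists_eq_pow_add_reindex_mul_pow {R ι κ : Type*} [CommSemiring R] [Fintype ι]
    [DecidableEq ι] [Fintype κ] [DecidableEq κ] {k : ℕ} (e : ι ≃ κ) {J : Matrix ι ι R}
    (h : ∀ C : Matrix ι ι R, ∃ X₁ X₂ : Matrix ι ι R, C = X₁ ^ k + J * X₂ ^ k)
    (C : Matrix κ κ R) : ∃ X₁ X₂ : Matrix κ κ R, C = X₁ ^ k + reindex e e J * X₂ ^ k := by
  let φ := reindexAlgEquiv R R e
  obtain ⟨X₁, X₂, hC⟩ := h (φ.symm C)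
  refine ⟨φ X₁, φ X₂, ?_⟩
  rw [show reindex e e J = φ J from rfl, ← map_pow, ← map_pow, ← map_mul, ← map_add, ← hC,
    φ.apply_symm_apply]

section
variable {F ι : Type*} [Field F] [Fintype ι] [DecidableEq ι]

theorem Matrix.exists_ne_and_eval_charpoly_ne_zero [Infinite F] (C : Matrix ι ι F) (β : F) :
    ∃ α, α ≠ β ∧ C.charpoly.eval α ≠ 0 := by
  classical
  obtain ⟨α, hα⟩ := Infinite.exists_notMem_finset (insert β C.charpoly.roots.toFinset)
  refine ⟨α, ?_, ?_⟩ <;> contrapose! hα <;> simp [hα, C.charpoly_monic.ne_zero]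

theorem Matrix.mul_mul_add_vecMulVec {R : Type*} [CommRing R] {J G Z : Matrix ι ι R}
    {u v w : ι → R} (hJG : J * G = 1 - vecMulVec v w) (hJu : J *ᵥ u = 0) (hwZ : w ᵥ* Z = 0)
    (z : ι → R) : J * (G * Z + vecMulVec u z) = Z := by
  rw [Matrix.mul_add, ← Matrix.mul_assoc, hJG, Matrix.sub_mul, Matrix.one_mul, vecMulVec_mul,
    hwZ, mul_vecMulVec, hJu]
  simp

theorem Matrix.exists_eq_pow_add_mul_pow [IsAlgClosed F] [CharZero F] {k : ℕ} (hk : k ≠ 0)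
    {J G : Matrix ι ι F} {u v w : ι → F} (hJG : J * G = 1 - vecMulVec v w) (hwv : w ⬝ᵥ v = 1)
    (hJu : J *ᵥ u = 0) (hu : u ≠ 0) (C : Matrix ι ι F) :
    ∃ X₁ X₂ : Matrix ι ι F, C = X₁ ^ k + J * X₂ ^ k := by
  obtain ⟨α, hαβ, hαC⟩ := C.exists_ne_and_eval_charpoly_ne_zero (w ᵥ* C ⬝ᵥ v)
  set z := w ᵥ* C - α • w
  set R := vecMulVec v z
  have hzv : z ⬝ᵥ v ≠ 0 := by
    simpa [z, sub_dotProduct, hwv, sub_eq_zero] using hαβ.symm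
  have hR : R * R = (z ⬝ᵥ v) • R := by simp [R, vecMulVec_mul_vecMulVec, dotProduct_comm]
  obtain ⟨X₁, hX₁⟩ := exists_pow_eq_smul_one_add hk hzv hR α
  set Z := C - (α • 1 + R)
  have hwZ : w ᵥ* Z = 0 := by
    simp [Z, R, z, vecMul_sub, vecMul_add, vecMul_vecMulVec, vecMul_smul, hwv]
  set Y := G * Z + vecMulVec u z
  have hJY : J * Y = Z := mul_mul_add_vecMulVec hJG hJu hwZ z
  have hY : IsUnit Y := by
    rw [isUnit_iff_isUnit_det, isUnit_iff_ne_zero]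
    intro h0
    obtain ⟨x, hx0, hYx⟩ := exists_mulVec_eq_zero_iff.mpr h0
    have hZx : Z *ᵥ x = 0 := by rw [← hJY, ← mulVec_mulVec, hYx, mulVec_zero]
    have hzx : z ⬝ᵥ x = 0 := by
      have : (z ⬝ᵥ x) • u = 0 := by
        simpa [Y, add_mulVec, ← mulVec_mulVec, hZx, vecMulVec_mulVec] using hYx
      exact (smul_eq_zero.mp this).resolve_right hu
    have : (scalar ι α - C) *ᵥ x = 0 := by
      rw [← neg_eq_zero, ← neg_mulVec, neg_sub]
      simpa [Z, R, sub_mulVec, add_mulVec, vecMulVec_mulVec, hzx, smul_one_eq_diagonal] using hZx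
    exact hαC (by rw [eval_charpoly]; exact exists_mulVec_eq_zero_iff.mp ⟨x, hx0, this⟩)
  obtain ⟨X₂, hX₂⟩ := exists_pow_eq_of_isIntegral_of_isUnit hk (IsIntegral.of_finite F Y) hY
  exact ⟨X₁, X₂, by rw [hX₁, hX₂, hJY, add_sub_cancel]⟩
end

section
variable {F : Type*}

theorem jordanBlock_zero_apply [Zero F] [One F] {m : ℕ} (i j : Fin m) :
    jordanBlock (0 : F) m i j = if (i : ℕ) + 1 = j then 1 else 0 := by
  by_cases h : i = j <;> simp [jordanBlock, h]

theorem jordanBlock_isUpperTriangular [Zero F] [One F] (lam : F) (m : ℕ) :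
    (jordanBlock lam m).IsUpperTriangular := by
  intro i j (hij : j < i)
  have : (i : ℕ) + 1 ≠ j := by omega
  simp [jordanBlock, hij.ne', this]

theorem det_jordanBlock [CommRing F] (lam : F) (m : ℕ) : (jordanBlock lam m).det = lam ^ m := by
  rw [det_of_isUpperTriangular (jordanBlock_isUpperTriangular lam m)]
  simp [jordanBlock]

theorem jordanBlock_zero_mul_transpose [Ring F] {m : ℕ} (l : Fin m) (hl : (l : ℕ) + 1 = m) :
    jordanBlock (0 : F) m * (jordanBlock 0 m)ᵀ = 1 - single l l 1 := by
  ext a b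
  simp only [mul_apply, transpose_apply, jordanBlock_zero_apply, ite_mul, one_mul, zero_mul]
  rw [Fin.sum_univ_eq_sum_range (fun c => if (a : ℕ) + 1 = c then
    (if (b : ℕ) + 1 = c then (1 : F) else 0) else 0), Finset.sum_ite_eq]
  simp only [Finset.mem_range, Matrix.sub_apply, one_apply, single_apply, Fin.ext_iff]
  split_ifs <;> first | rfl | (exfalso; omega) | simp

variable {ι : Type*} [Fintype ι] [DecidableEq ι] {sz : ι → ℕ} {lam : ι → F} {i₀ : ι}

theorem blockDiagonal'_jordanBlock_mulVec_single_eq_zero [Semiring F] (hlam : lam i₀ = 0)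
    (f : Fin (sz i₀)) (hf : (f : ℕ) = 0) :
    blockDiagonal' (fun i => jordanBlock (lam i) (sz i)) *ᵥ Pi.single ⟨i₀, f⟩ 1 = 0 := by
  ext ⟨i, a⟩
  rw [mulVec_single_one]
  by_cases hi : i = i₀
  · subst hi
    simp [blockDiagonal'_apply_eq, hlam, jordanBlock_zero_apply, hf]
  · simp [blockDiagonal'_apply_ne _ _ _ hi]

theorem exists_blockDiagonal'_jordanBlock_mul_eq_one_sub_single [Field F] (hlam₀ : lam i₀ = 0)
    (hlam : ∀ i, i ≠ i₀ → lam i ≠ 0) (l : Fin (sz i₀)) (hl : (l : ℕ) + 1 = sz i₀) :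
    ∃ G, blockDiagonal' (fun i => jordanBlock (lam i) (sz i)) * G =
      1 - single ⟨i₀, l⟩ ⟨i₀, l⟩ 1 := by
  refine ⟨blockDiagonal' fun i => if i = i₀ then (jordanBlock (lam i) (sz i))ᵀ
    else (jordanBlock (lam i) (sz i))⁻¹, ?_⟩
  rw [← blockDiagonal'_mul]
  ext ⟨i, a⟩ ⟨j, b⟩
  by_cases hij : i = j
  · subst hij
    rw [blockDiagonal'_apply_eq]
    by_cases hi : i = i₀
    · subst hi
      simp [hlam₀, jordanBlock_zero_mul_transpose l hl, single_apply, one_apply]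
    · have hdet : IsUnit (jordanBlock (lam i) (sz i)).det := by
        rw [det_jordanBlock]
        exact (pow_ne_zero _ (hlam i hi)).isUnit
      rw [if_neg hi, mul_nonsing_inv _ hdet]
      simp [one_apply, Ne.symm hi]
  · rw [blockDiagonal'_apply_ne _ _ _ hij]
    simp [one_apply, single_apply, hij]
    rintro rfl - rfl
    exact (hij rfl).elim

end

theorem stmt_8_general {F : Type*} [Field F] [DecidableEq F] [IsAlgClosed F] [CharZero F] {n r : ℕ}
    (k : ℕ) (hk : 2 ≤ k)
    (sz : Fin r → ℕ) (hsz : ∀ i, 0 < sz i) (lam : Fin r → F)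
    (hone : (Finset.univ.filter (fun i : Fin r => lam i = 0)).card = 1)
    (e : (Σ i : Fin r, Fin (sz i)) ≃ Fin n)
    (J : Matrix (Fin n) (Fin n) F)
    (hJ : J = Matrix.reindex e e
      (Matrix.blockDiagonal' (fun i => jordanBlock (lam i) (sz i))))
    (C : Matrix (Fin n) (Fin n) F) :
    ∃ X₁ X₂ : Matrix (Fin n) (Fin n) F, C = X₁ ^ k + J * X₂ ^ k := by
  obtain ⟨i₀, hi₀⟩ := Finset.card_eq_one.mp hone
  have hlam : ∀ i, lam i = 0 ↔ i = i₀ := fun i => by simpa using Finset.ext_iff.mp hi₀ i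
  have hlam₀ : lam i₀ = 0 := (hlam i₀).mpr rfl
  have hpos := hsz i₀
  obtain ⟨G, hG⟩ := exists_blockDiagonal'_jordanBlock_mul_eq_one_sub_single (sz := sz) hlam₀
    (fun i hi => mt (hlam i).mp hi) ⟨sz i₀ - 1, by omega⟩ (by simp only; omega)
  rw [single_eq_single_vecMulVec_single] at hG
  have hJu := blockDiagonal'_jordanBlock_mulVec_single_eq_zero hlam₀ ⟨0, hpos⟩ rfl
  subst hJ
  exact exists_eq_pow_add_reindex_mul_pow e
    (exists_eq_pow_add_mul_pow (by omega) hG (by simp) hJu (by simp)) C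

/-- If `J` is a Jordan canonical form with at least two Jordan blocks, exactly one
of which has eigenvalue `0`, then every `C` can be written as `X₁^k + J X₂^k`. -/
theorem stmt_8 {F : Type*} [Field F] [DecidableEq F] [IsAlgClosed F] [CharZero F] {n r : ℕ}
    (k : ℕ) (hk : 2 ≤ k)
    (sz : Fin r → ℕ) (hsz : ∀ i, 0 < sz i) (lam : Fin r → F)
    (hr : 2 ≤ r)
    (hone : (Finset.univ.filter (fun i : Fin r => lam i = 0)).card = 1)
    (e : (Σ i : Fin r, Fin (sz i)) ≃ Fin n)
    (J : Matrix (Fin n) (Fin n) F)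
    (hJ : J = Matrix.reindex e e
      (Matrix.blockDiagonal' (fun i => jordanBlock (lam i) (sz i))))
    (C : Matrix (Fin n) (Fin n) F) :
    ∃ X₁ X₂ : Matrix (Fin n) (Fin n) F, C = X₁ ^ k + J * X₂ ^ k :=
  stmt_8_general k hk sz hsz lam hone e J hJ C
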